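/- If R ⊆ P is a skew category of partitions, then F_∞(R) := S_∞({a_{ind(p)} : k ∈ ℕ₀, p ∈ R(k,0)}) is an S_∞-invariant normal subgroup of ℤ₂^{*∞}. -/

import Mathlib

attribute [local instance] Classical.propDecidable

noncomputable section

namespace GTQG

/-! ## Partitions -/

/-- The set `P(k,l)` of partitions of `{1,…,k,1',…,l'}`, encoded as equivalence
relations (i.e. set partitions) on the disjoint union `Fin k ⊕ Fin l`. -/
abbrev Part (k l : ℕ) : Type := Setoid (Fin k ⊕ Fin l)

/-- `ker(i,j)`: the partition whose blocks are the fibers of the labelling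
`x ↦ i x` on upper points and `y ↦ j y` on lower points. -/
def kerPartA {α : Type*} {k l : ℕ} (i : Fin k → α) (j : Fin l → α) : Part k l :=
  Setoid.ker (Sum.elim i j)

/-- `ker(i,j)` for `ℕ`-valued multi-indices. -/
abbrev kerPart {k l : ℕ} (i : Fin k → ℕ) (j : Fin l → ℕ) : Part k l := kerPartA i j

/-- `ker(i) = ker(i,∅) ∈ P(k,0)`. -/
def kerPart0 {k : ℕ} (i : Fin k → ℕ) : Part k 0 := kerPartA i Fin.elim0

/-- The pair partition `⊔ ∈ P(0,2)`. -/
def pairPart : Part 0 2 := kerPartA Fin.elim0 (fun _ => (1 : ℕ))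

/-- The identity partition `| ∈ P(1,1)`. -/
def idPart : Part 1 1 := kerPartA (fun _ => (1 : ℕ)) (fun _ => (1 : ℕ))

/-- The partition `p̂ = ker((1,1,2),(2,1,1)) ∈ P(3,3)`. -/
def pHat : Part 3 3 := kerPart ![1, 1, 2] ![2, 1, 1]

/-- The involution `p* ∈ P(l,k)`, turning `p` upside-down. -/
def invol {k l : ℕ} (p : Part k l) : Part l k := Setoid.comap Sum.swap p

/-- The number of blocks of a partition. -/
def blockCount {k l : ℕ} (p : Part k l) : ℕ := Nat.card (Quotient p)

/-- The restriction of `p` to its upper row. -/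
def upperSetoid {k l : ℕ} (p : Part k l) : Setoid (Fin k) := Setoid.comap Sum.inl p

/-- The restriction of `p` to its lower row. -/
def lowerSetoid {k l : ℕ} (p : Part k l) : Setoid (Fin l) := Setoid.comap Sum.inr p

/-- `p ∈ P(k,l)` and `q ∈ P(l,l')` are compatible if the lower row of `p`
and the upper row of `q` have the same block structure
(i.e. `j^(p) ∈ S_∞(i^(q))`). -/
def Compatible {k l l' : ℕ} (p : Part k l) (q : Part l l') : Prop :=
  lowerSetoid p = upperSetoid q

section Comp

variable {k l l' : ℕ}

/-- The points of the vertical concatenation of `p ∈ P(k,l)` and `q ∈ P(l,l')`: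
`k` upper points, `l` middle points, `l'` lower points. -/
abbrev CompCarrier (k l l' : ℕ) : Type := Fin k ⊕ (Fin l ⊕ Fin l')

/-- Inclusion of the points of `p` into the vertical concatenation. -/
def topIncl : Fin k ⊕ Fin l → CompCarrier k l l' := Sum.map id Sum.inl

/-- Inclusion of the points of `q` into the vertical concatenation. -/
def botIncl : Fin l ⊕ Fin l' → CompCarrier k l l' := Sum.inr

/-- Two points of the vertical concatenation are directly connected if they are
connected by a string of `p` or by a string of `q`. -/
def compRel (p : Part k l) (q : Part l l') :
    CompCarrier k l l' → CompCarrier k l l' → Prop := fun x y =>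
  (∃ u v, p u v ∧ x = topIncl u ∧ y = topIncl v) ∨
  (∃ u v, q u v ∧ x = botIncl u ∧ y = botIncl v)

/-- The partition of all points of the vertical concatenation of `p` and `q`
into connected components. -/
def middleJoin (p : Part k l) (q : Part l l') : Setoid (CompCarrier k l l') :=
  Relation.EqvGen.setoid (compRel p q)

/-- The composition `qp ∈ P(k,l')`: vertical concatenation with all loops removed. -/
def compPart (p : Part k l) (q : Part l l') : Part k l' :=
  Setoid.comap (Sum.map id Sum.inr) (middleJoin p q)

/-- A point of the vertical concatenation is a middle point. -/
def IsMiddle (x : CompCarrier k l l') : Prop := ∃ m : Fin l, x = Sum.inr (Sum.inl m)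

/-- The number `l(q,p)` of loops in the vertical concatenation of `p` and `q`:
connected components consisting entirely of middle points. -/
def loopCount (p : Part k l) (q : Part l l') : ℕ :=
  Nat.card {c : Quotient (middleJoin p q) //
    ∀ x : CompCarrier k l l', Quotient.mk (middleJoin p q) x = c → IsMiddle x}

end Comp

/-- The direct sum of two set partitions. -/
def sumSetoid {α β : Type*} (p : Setoid α) (q : Setoid β) : Setoid (α ⊕ β) :=
  Setoid.ker (Sum.map (Quotient.mk p) (Quotient.mk q))

/-- The tensor product `p ⊗ q ∈ P(k+k',l+l')`: horizontal concatenation. -/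
def tensorPart {k l k' l' : ℕ} (p : Part k l) (q : Part k' l') : Part (k + k') (l + l') :=
  Setoid.comap
    (Sum.elim
      (fun z => Fin.addCases (fun a => Sum.inl (Sum.inl a)) (fun b => Sum.inr (Sum.inl b)) z)
      (fun z => Fin.addCases (fun a => Sum.inl (Sum.inr a)) (fun b => Sum.inr (Sum.inr b)) z))
    (sumSetoid p q)

/-! ## Rotations -/

/-- Rotating the outermost left upper leg to the lower row (reindexing map). -/
def rotULDmap (k l : ℕ) : Fin k ⊕ Fin (l + 1) → Fin (k + 1) ⊕ Fin l
  | .inl x => .inl x.succ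
  | .inr y => Fin.cases (Sum.inl 0) (fun i => Sum.inr i) y

/-- Rotating the outermost left upper leg to the lower row. -/
def rotULD {k l : ℕ} (p : Part (k + 1) l) : Part k (l + 1) :=
  Setoid.comap (rotULDmap k l) p

/-- Rotating the outermost left lower leg to the upper row (reindexing map). -/
def rotDLUmap (k l : ℕ) : Fin (k + 1) ⊕ Fin l → Fin k ⊕ Fin (l + 1)
  | .inl x => Fin.cases (Sum.inr 0) (fun i => Sum.inl i) x
  | .inr y => .inr y.succ

/-- Rotating the outermost left lower leg to the upper row. -/
def rotDLU {k l : ℕ} (p : Part k (l + 1)) : Part (k + 1) l :=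
  Setoid.comap (rotDLUmap k l) p

/-- Rotating the outermost right upper leg to the lower row (reindexing map). -/
def rotURDmap (k l : ℕ) : Fin k ⊕ Fin (l + 1) → Fin (k + 1) ⊕ Fin l
  | .inl x => .inl x.castSucc
  | .inr y => Fin.lastCases (Sum.inl (Fin.last k)) (fun i => Sum.inr i) y

/-- Rotating the outermost right upper leg to the lower row. -/
def rotURD {k l : ℕ} (p : Part (k + 1) l) : Part k (l + 1) :=
  Setoid.comap (rotURDmap k l) p

/-- Rotating the outermost right lower leg to the upper row (reindexing map). -/
def rotDRUmap (k l : ℕ) : Fin (k + 1) ⊕ Fin l → Fin k ⊕ Fin (l + 1)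
  | .inl x => Fin.lastCases (Sum.inr (Fin.last l)) (fun i => Sum.inl i) x
  | .inr y => .inr y.castSucc

/-- Rotating the outermost right lower leg to the upper row. -/
def rotDRU {k l : ℕ} (p : Part k (l + 1)) : Part (k + 1) l :=
  Setoid.comap (rotDRUmap k l) p

/-- One basic rotation step between partitions (with varying numbers of
upper and lower points). -/
inductive BasicRot : (Σ k l : ℕ, Part k l) → (Σ k l : ℕ, Part k l) → Prop
  | uld {k l : ℕ} (p : Part (k + 1) l) : BasicRot ⟨k + 1, l, p⟩ ⟨k, l + 1, rotULD p⟩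
  | dlu {k l : ℕ} (p : Part k (l + 1)) : BasicRot ⟨k, l + 1, p⟩ ⟨k + 1, l, rotDLU p⟩
  | urd {k l : ℕ} (p : Part (k + 1) l) : BasicRot ⟨k + 1, l, p⟩ ⟨k, l + 1, rotURD p⟩
  | dru {k l : ℕ} (p : Part k (l + 1)) : BasicRot ⟨k, l + 1, p⟩ ⟨k + 1, l, rotDRU p⟩

/-- `IsRotationOf q p`: `q` is obtained from `p` by finitely many basic rotations. -/
def IsRotationOf (q p : Σ k l : ℕ, Part k l) : Prop := Relation.ReflTransGen BasicRot p q

/-- A family `R ⊆ P` is closed under rotation. -/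
def RotationClosed (R : ∀ k l : ℕ, Set (Part k l)) : Prop :=
  ∀ {k l k' l' : ℕ} (p : Part k l) (q : Part k' l'),
    p ∈ R k l → IsRotationOf ⟨k', l', q⟩ ⟨k, l, p⟩ → q ∈ R k' l'

/-! ## (Skew) categories of partitions -/

/-- A skew category of partitions: a collection `R ⊆ P` containing `⊔` and `|`,
closed under involution, connected tensor products and conditioned composition. -/
structure IsSkewCategory (R : ∀ k l : ℕ, Set (Part k l)) : Prop where
  pair_mem : pairPart ∈ R 0 2
  id_mem : idPart ∈ R 1 1
  invol_mem : ∀ {k l : ℕ} {p : Part k l}, p ∈ R k l → invol p ∈ R l k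
  conn_tensor_mem : ∀ {k l k' l' : ℕ} {p : Part k l} {q : Part k' l'}
      (i : Fin k → ℕ) (j : Fin l → ℕ) (f : Fin k' → ℕ) (g : Fin l' → ℕ),
      p ∈ R k l → q ∈ R k' l' → kerPart i j = p → kerPart f g = q →
      kerPart (Fin.append i f) (Fin.append j g) ∈ R (k + k') (l + l')
  cond_comp_mem : ∀ {k l l' : ℕ} {p : Part k l} {q : Part l l'},
      p ∈ R k l → q ∈ R l l' → Compatible p q → compPart p q ∈ R k l'

/-- A category of partitions: a collection `C ⊆ P` containing `⊔` and `|`,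
closed under involution, tensor products and composition. -/
structure IsCategoryOfPartitions (C : ∀ k l : ℕ, Set (Part k l)) : Prop where
  pair_mem : pairPart ∈ C 0 2
  id_mem : idPart ∈ C 1 1
  invol_mem : ∀ {k l : ℕ} {p : Part k l}, p ∈ C k l → invol p ∈ C l k
  tensor_mem : ∀ {k l k' l' : ℕ} {p : Part k l} {q : Part k' l'},
      p ∈ C k l → q ∈ C k' l' → tensorPart p q ∈ C (k + k') (l + l')
  comp_mem : ∀ {k l l' : ℕ} {p : Part k l} {q : Part l l'},
      p ∈ C k l → q ∈ C l l' → compPart p q ∈ C k l'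

/-- The skew category of partitions generated by a family `E`. -/
def skewGenerated (E : ∀ k l : ℕ, Set (Part k l)) : ∀ k l : ℕ, Set (Part k l) :=
  fun k l => { p | ∀ R : ∀ k l : ℕ, Set (Part k l),
    IsSkewCategory R → (∀ k' l' : ℕ, E k' l' ⊆ R k' l') → p ∈ R k l }

/-- The category of partitions generated by a family `E`. -/
def catGenerated (E : ∀ k l : ℕ, Set (Part k l)) : ∀ k l : ℕ, Set (Part k l) :=
  fun k l => { p | ∀ C : ∀ k l : ℕ, Set (Part k l),
    IsCategoryOfPartitions C → (∀ k' l' : ℕ, E k' l' ⊆ C k' l') → p ∈ C k l }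

end GTQG
namespace GTQG

/-! ## The free products `ℤ₂^{*∞}` and `ℤ₂^{*n}` -/

/-- The cyclic group of order two (written multiplicatively). -/
abbrev Z2 : Type := Multiplicative (ZMod 2)

/-- `ℤ₂^{*∞}`, the free product of countably many copies of `ℤ₂`. -/
abbrev FreeZ2 : Type := Monoid.CoprodI (fun _ : ℕ => Z2)

/-- `ℤ₂^{*n}`, the free product of `n` copies of `ℤ₂`. -/
abbrev FreeZ2n (n : ℕ) : Type := Monoid.CoprodI (fun _ : Fin n => Z2)

/-- The generator `a_i` of `ℤ₂^{*∞}`. -/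
def gen (i : ℕ) : FreeZ2 := Monoid.CoprodI.of (i := i) (Multiplicative.ofAdd (1 : ZMod 2))

/-- The generator `a_i` of `ℤ₂^{*n}`. -/
def genn {n : ℕ} (i : Fin n) : FreeZ2n n :=
  Monoid.CoprodI.of (i := i) (Multiplicative.ofAdd (1 : ZMod 2))

/-- The word `a_i = a_{i₁} ⋯ a_{i_k} ∈ ℤ₂^{*∞}` associated to a multi-index. -/
def aWord {k : ℕ} (i : Fin k → ℕ) : FreeZ2 := (List.ofFn fun x => gen (i x)).prod

/-- The word `a_i = a_{i₁} ⋯ a_{i_k} ∈ ℤ₂^{*n}` associated to a multi-index. -/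
def aWordn {n k : ℕ} (i : Fin k → Fin n) : FreeZ2n n := (List.ofFn fun x => genn (i x)).prod

/-- The natural embedding `ℤ₂^{*n} → ℤ₂^{*∞}`. -/
def incl (n : ℕ) : FreeZ2n n →* FreeZ2 :=
  Monoid.CoprodI.lift (fun i => Monoid.CoprodI.of (M := fun _ : ℕ => Z2) (i := (i : ℕ)))

/-- The endomorphism of `ℤ₂^{*∞}` induced by a map `σ : ℕ → ℕ`, `a_i ↦ a_{σ i}`.
For bijective `σ` this is the action of `S_∞`, in general that of `sS_∞`. -/
def permEndo (σ : ℕ → ℕ) : FreeZ2 →* FreeZ2 :=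
  Monoid.CoprodI.lift (fun i => Monoid.CoprodI.of (M := fun _ : ℕ => Z2) (i := σ i))

/-- The endomorphism of `ℤ₂^{*n}` induced by a map `σ : Fin n → Fin n`. -/
def permEndon {n : ℕ} (σ : Fin n → Fin n) : FreeZ2n n →* FreeZ2n n :=
  Monoid.CoprodI.lift (fun i => Monoid.CoprodI.of (M := fun _ : Fin n => Z2) (i := σ i))

/-- A map `ℕ → ℕ` is finitely supported (moves only finitely many points). -/
def FinitelySupported (σ : ℕ → ℕ) : Prop := {x | σ x ≠ x}.Finite

/-- `F_∞(D) = S_∞({a_{ind(p)} : p ∈ D(k,0)})`, the set of all words `a_i` with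
`ker(i) ∈ D(k,0)` (the `S_∞`-orbit of the words of minimal-index labellings). -/
def Finfty (D : ∀ k l : ℕ, Set (Part k l)) : Set FreeZ2 :=
  { g | ∃ (k : ℕ) (i : Fin k → ℕ), kerPart0 i ∈ D k 0 ∧ g = aWord i }

end GTQG
namespace GTQG

/-! ## The maps `T̂_p` and `T_p` -/

/-- `(ℂ^n)^{⊗k}`, realised as functions on multi-indices (the standard basis
`e_{i₁} ⊗ ⋯ ⊗ e_{i_k}` is indexed by multi-indices `i ∈ {1,…,n}^k`). -/
abbrev MV (n k : ℕ) : Type := (Fin k → Fin n) → ℂ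

/-- `δ̂_p(i,j) = 1` iff `(i,j) ∈ S_∞(ind(p))`, i.e. iff `ker(i,j) = p`. -/
def hatDelta {k l : ℕ} (p : Part k l) {n : ℕ} (i : Fin k → Fin n) (j : Fin l → Fin n) : ℂ :=
  if kerPartA i j = p then 1 else 0

/-- `δ_p(i,j) = 1` iff `(i,j) ∈ sS_∞(ind(p))`, i.e. iff the labelling `(i,j)`
is constant on the blocks of `p`. -/
def softDelta {k l : ℕ} (p : Part k l) {n : ℕ} (i : Fin k → Fin n) (j : Fin l → Fin n) : ℂ :=
  if p ≤ kerPartA i j then 1 else 0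

/-- The linear map `T̂_p^(n) : (ℂ^n)^{⊗k} → (ℂ^n)^{⊗l}`. -/
def hatT (n : ℕ) {k l : ℕ} (p : Part k l) : MV n k →ₗ[ℂ] MV n l :=
  Matrix.mulVecLin (Matrix.of fun (j : Fin l → Fin n) (i : Fin k → Fin n) => hatDelta p i j)

/-- The linear map `T_p^(n) : (ℂ^n)^{⊗k} → (ℂ^n)^{⊗l}` of Banica–Speicher. -/
def softT (n : ℕ) {k l : ℕ} (p : Part k l) : MV n k →ₗ[ℂ] MV n l :=
  Matrix.mulVecLin (Matrix.of fun (j : Fin l → Fin n) (i : Fin k → Fin n) => softDelta p i j)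

/-- The tensor product of linear maps, under the identification
`(ℂ^n)^{⊗k} ⊗ (ℂ^n)^{⊗k'} ≅ (ℂ^n)^{⊗(k+k')}` of basis vectors
`(e_{i} ⊗ e_{f} ↦ e_{if}`, concatenation of multi-indices). -/
def tensorMap {n k l k' l' : ℕ} (S : MV n k →ₗ[ℂ] MV n l) (T : MV n k' →ₗ[ℂ] MV n l') :
    MV n (k + k') →ₗ[ℂ] MV n (l + l') :=
  Matrix.mulVecLin (Matrix.of fun (x : Fin (l + l') → Fin n) (y : Fin (k + k') → Fin n) =>
    LinearMap.toMatrix' S (fun a => x (Fin.castAdd l' a)) (fun a => y (Fin.castAdd k' a)) *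
    LinearMap.toMatrix' T (fun b => x (Fin.natAdd l b)) (fun b => y (Fin.natAdd k b)))

/-- The adjoint of a linear map `(ℂ^n)^{⊗k} → (ℂ^n)^{⊗l}` with respect to the
standard Hermitian inner products (conjugate-transpose of the matrix in the
standard bases). -/
def adjointMap {n k l : ℕ} (S : MV n k →ₗ[ℂ] MV n l) : MV n l →ₗ[ℂ] MV n k :=
  Matrix.mulVecLin (LinearMap.toMatrix' S).conjTranspose

/-- The map `ζ : ℂ → (ℂ^n)^{⊗2}`, `1 ↦ Σᵢ eᵢ ⊗ eᵢ`. -/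
def zetaMap (n : ℕ) : MV n 0 →ₗ[ℂ] MV n 2 :=
  Matrix.mulVecLin (Matrix.of fun (j : Fin 2 → Fin n) (_ : Fin 0 → Fin n) =>
    if j 0 = j 1 then (1 : ℂ) else 0)

/-- A tensor category with duals (of subspaces of `Hom((ℂ^n)^{⊗k}, (ℂ^n)^{⊗l})`). -/
structure IsTensorCategoryWithDuals (n : ℕ)
    (H : ∀ k l : ℕ, Submodule ℂ (MV n k →ₗ[ℂ] MV n l)) : Prop where
  tensor_mem : ∀ {k l k' l' : ℕ} (S : MV n k →ₗ[ℂ] MV n l) (T : MV n k' →ₗ[ℂ] MV n l'),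
      S ∈ H k l → T ∈ H k' l' → tensorMap S T ∈ H (k + k') (l + l')
  comp_mem : ∀ {k l l' : ℕ} (S : MV n k →ₗ[ℂ] MV n l) (T : MV n l →ₗ[ℂ] MV n l'),
      S ∈ H k l → T ∈ H l l' → T ∘ₗ S ∈ H k l'
  adjoint_mem : ∀ {k l : ℕ} (S : MV n k →ₗ[ℂ] MV n l), S ∈ H k l → adjointMap S ∈ H l k
  id_mem : LinearMap.id ∈ H 1 1
  zeta_mem : zetaMap n ∈ H 0 2

/-- The collection of subspaces `span{T̂_p^(n) : p ∈ R(k,l)}`. -/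
def spanOf (n : ℕ) (R : ∀ k l : ℕ, Set (Part k l)) :
    ∀ k l : ℕ, Submodule ℂ (MV n k →ₗ[ℂ] MV n l) :=
  fun k l => Submodule.span ℂ {T | ∃ p ∈ R k l, T = hatT n p}

/-- All connected tensor products of `p` and `q`. -/
def connTensorSet {k l k' l' : ℕ} (p : Part k l) (q : Part k' l') :
    Set (Part (k + k') (l + l')) :=
  { r | ∃ (i : Fin k → ℕ) (j : Fin l → ℕ) (f : Fin k' → ℕ) (g : Fin l' → ℕ),
      kerPart i j = p ∧ kerPart f g = q ∧ r = kerPart (Fin.append i f) (Fin.append j g) }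

/-- All connected conditioned compositions of `p` and `q`. -/
def connCompSet {k l l' : ℕ} (p : Part k l) (q : Part l l') : Set (Part k l') :=
  { r | ∃ (i : Fin k → ℕ) (h : Fin l → ℕ) (g : Fin l' → ℕ),
      kerPart i h = p ∧ kerPart h g = q ∧ r = kerPart i g }

end GTQG
/-!
Every partition used below is a kernel `ker(u,v)`, and composing `ker(u,m)` with `ker(m,v)`
gives `ker(u,v)` as soon as each label shared by `u` and `v` occurs in `m`; so the skew-category
operations become operations on labellings. The connected tensor product of `ker(i)` and
`ker(f)` is `ker(if)`, giving products. Composing with `id ⊗ ⊔*` rotates a lower point to the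
upper row: rotating all points of `ker(i)* = ker(∅,i)` up gives a labelling whose word is
`a_i⁻¹`, and tensoring `| = ker(b,b)` with `ker(i)` and rotating once gives `a_b a_i a_b`, which
yields normality. An injective relabelling leaves `ker(i)` unchanged, so `S_∞` maps `F_∞(R)`
onto itself.
-/

namespace GTQG

section Kernels

variable {α β : Type*}

lemma kerPartA_comp_of_injective {f : α → β} (hf : Function.Injective f) {k l : ℕ}
    (i : Fin k → α) (j : Fin l → α) : kerPartA (f ∘ i) (f ∘ j) = kerPartA i j :=
  Setoid.ext fun a b => by cases a <;> cases b <;> exact hf.eq_iff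

lemma kerPartA_const (a b : α) {k l : ℕ} :
    kerPartA (fun _ : Fin k => a) (fun _ : Fin l => a) =
      kerPartA (fun _ : Fin k => b) (fun _ : Fin l => b) :=
  Setoid.ext fun x y => by cases x <;> cases y <;> exact iff_of_true rfl rfl

lemma invol_kerPartA {k l : ℕ} (i : Fin k → α) (j : Fin l → α) :
    invol (kerPartA i j) = kerPartA j i :=
  Setoid.ext fun a b => by cases a <;> cases b <;> exact Iff.rfl

lemma compatible_kerPartA {k l l' : ℕ} (u : Fin k → α) (m : Fin l → α) (v : Fin l' → α) :
    Compatible (kerPartA u m) (kerPartA m v) :=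
  Setoid.ext fun _ _ => Iff.rfl

lemma eqvGen_compRel_kerPartA_iff {k l l' : ℕ} {u : Fin k → α} {m : Fin l → α}
    {v : Fin l' → α} (hcover : ∀ s y, u s = v y → ∃ t, m t = u s)
    (x y : CompCarrier k l l') :
    Relation.EqvGen (compRel (kerPartA u m) (kerPartA m v)) x y ↔
      Sum.elim u (Sum.elim m v) x = Sum.elim u (Sum.elim m v) y := by
  have top : ∀ a b : Fin k ⊕ Fin l, Sum.elim u m a = Sum.elim u m b →
      Relation.EqvGen (compRel (kerPartA u m) (kerPartA m v)) (topIncl a) (topIncl b) :=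
    fun a b h => .rel _ _ (.inl ⟨a, b, h, rfl, rfl⟩)
  have bot : ∀ a b : Fin l ⊕ Fin l', Sum.elim m v a = Sum.elim m v b →
      Relation.EqvGen (compRel (kerPartA u m) (kerPartA m v)) (botIncl a) (botIncl b) :=
    fun a b h => .rel _ _ (.inr ⟨a, b, h, rfl, rfl⟩)
  have upper_lower : ∀ s y', u s = v y' →
      Relation.EqvGen (compRel (kerPartA u m) (kerPartA m v)) (.inl s) (.inr (.inr y')) := by
    intro s y' h
    obtain ⟨t, ht⟩ := hcover s y' h
    exact .trans _ _ _ (top (.inl s) (.inr t) ht.symm) (bot (.inl t) (.inr y') (ht.trans h))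
  constructor
  · intro h
    induction h with
    | rel a b hab =>
        rcases hab with ⟨c, d, hcd, rfl, rfl⟩ | ⟨c, d, hcd, rfl, rfl⟩ <;>
          cases c <;> cases d <;> exact hcd
    | refl => rfl
    | symm _ _ _ ih => exact ih.symm
    | trans _ _ _ _ _ ih₁ ih₂ => exact ih₁.trans ih₂
  · intro h
    match x, y with
    | .inl s, .inl s' => exact top (.inl s) (.inl s') h
    | .inl s, .inr (.inl t) => exact top (.inl s) (.inr t) h
    | .inr (.inl t), .inl s => exact top (.inr t) (.inl s) h
    | .inr (.inl t), .inr (.inl t') => exact top (.inr t) (.inr t') h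
    | .inr (.inl t), .inr (.inr y') => exact bot (.inl t) (.inr y') h
    | .inr (.inr y'), .inr (.inl t) => exact bot (.inr y') (.inl t) h
    | .inr (.inr y'), .inr (.inr y'') => exact bot (.inr y') (.inr y'') h
    | .inl s, .inr (.inr y') => exact upper_lower s y' h
    | .inr (.inr y'), .inl s => exact .symm _ _ (upper_lower s y' h.symm)

lemma compPart_kerPartA {k l l' : ℕ} {u : Fin k → α} {m : Fin l → α} {v : Fin l' → α}
    (hcover : ∀ s y, u s = v y → ∃ t, m t = u s) :
    compPart (kerPartA u m) (kerPartA m v) = kerPartA u v :=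
  Setoid.ext fun a b => by
    refine (eqvGen_compRel_kerPartA_iff hcover _ _).trans ?_
    cases a <;> cases b <;> exact Iff.rfl

instance : Subsingleton (Part 0 0) :=
  ⟨fun _ _ => Setoid.ext fun a => isEmptyElim a⟩

end Kernels

lemma append_const_two_eq_snoc_snoc {α : Type*} {l : ℕ} (v : Fin l → α) (b : α) :
    Fin.append v (fun _ : Fin 2 => b) = Fin.snoc (Fin.snoc v b) b := by
  ext i
  simp only [Fin.append, Fin.addCases, eq_rec_constant, Fin.snoc, Order.lt_add_one_iff,
    Fin.castSucc_castLT, Fin.val_castLT, cast_eq]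
  split_ifs <;> first | rfl | omega

section Words

lemma aWord_elim0 : aWord (Fin.elim0 : Fin 0 → ℕ) = 1 := rfl

lemma aWord_const_one (b : ℕ) : aWord (fun _ : Fin 1 => b) = gen b := by
  simp [aWord]

lemma aWord_append {k k' : ℕ} (i : Fin k → ℕ) (f : Fin k' → ℕ) :
    aWord (Fin.append i f) = aWord i * aWord f := by
  simp [aWord, List.ofFn_add]

lemma aWord_snoc {k : ℕ} (i : Fin k → ℕ) (b : ℕ) : aWord (Fin.snoc i b) = aWord i * gen b := by
  simp only [aWord, List.ofFn_succ', Fin.snoc_castSucc, Fin.snoc_last, List.prod_concat]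

lemma gen_inv (b : ℕ) : (gen b)⁻¹ = gen b := by
  rw [gen, ← map_inv]
  rfl

lemma permEndo_aWord (σ : ℕ → ℕ) {k : ℕ} (i : Fin k → ℕ) :
    permEndo σ (aWord i) = aWord (σ ∘ i) := by
  simp [aWord, permEndo, gen, map_list_prod, List.map_ofFn, Function.comp_def]

lemma kerPart0_comp_of_injective {σ : ℕ → ℕ} (hσ : Function.Injective σ) {k : ℕ}
    (i : Fin k → ℕ) : kerPart0 (σ ∘ i) = kerPart0 i :=
  (congrArg (kerPartA (σ ∘ i)) (Subsingleton.elim _ _)).trans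
    (kerPartA_comp_of_injective hσ i Fin.elim0)

end Words

namespace IsSkewCategory

variable {R : ∀ k l : ℕ, Set (Part k l)}

lemma kerPartA_const_mem_one_one (hR : IsSkewCategory R) (b : ℕ) :
    kerPartA (fun _ : Fin 1 => b) (fun _ : Fin 1 => b) ∈ R 1 1 :=
  kerPartA_const 1 b ▸ hR.id_mem

lemma kerPartA_const_mem_two_zero (hR : IsSkewCategory R) (b : ℕ) :
    kerPartA (fun _ : Fin 2 => b) (Fin.elim0 : Fin 0 → ℕ) ∈ R 2 0 := by
  have h : invol pairPart ∈ R 2 0 := hR.invol_mem hR.pair_mem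
  rwa [pairPart, invol_kerPartA, Subsingleton.elim Fin.elim0 (fun _ : Fin 0 => (1 : ℕ)),
    kerPartA_const 1 b, ← Subsingleton.elim Fin.elim0 (fun _ : Fin 0 => b)] at h

lemma kerPartA_elim0_mem (hR : IsSkewCategory R) :
    kerPartA (Fin.elim0 : Fin 0 → ℕ) Fin.elim0 ∈ R 0 0 := by
  have h := hR.cond_comp_mem hR.pair_mem (hR.invol_mem hR.pair_mem)
    (Setoid.ext fun _ _ => Iff.rfl)
  rwa [Subsingleton.elim (compPart pairPart (invol pairPart)) (kerPartA Fin.elim0 Fin.elim0)] at h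

lemma kerPartA_self_mem (hR : IsSkewCategory R) {l : ℕ} (v : Fin l → ℕ) :
    kerPartA v v ∈ R l l := by
  induction l with
  | zero => exact Subsingleton.elim (kerPartA Fin.elim0 Fin.elim0) (kerPartA v v) ▸
      hR.kerPartA_elim0_mem
  | succ l ih =>
      have h := hR.conn_tensor_mem _ _ _ _ (ih (Fin.init v))
        (hR.kerPartA_const_mem_one_one (v (Fin.last l))) rfl rfl
      rwa [Fin.append_right_eq_snoc, Fin.snoc_init_self] at h

/-- The rotation is the composition of `ker(w,v) ⊗ |` with `id_v ⊗ ⊔*`, whose middle row `v b b`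
contains every label of `v`. -/
lemma kerPartA_snoc_mem_of_mem_snoc (hR : IsSkewCategory R) {k l : ℕ} {w : Fin k → ℕ}
    {v : Fin l → ℕ} {b : ℕ} (h : kerPartA w (Fin.snoc v b) ∈ R k (l + 1)) :
    kerPartA (Fin.snoc w b) v ∈ R (k + 1) l := by
  have hw := hR.conn_tensor_mem _ _ _ _ h (hR.kerPartA_const_mem_one_one b) rfl rfl
  rw [Fin.append_right_eq_snoc, Fin.append_right_eq_snoc] at hw
  have hv := hR.conn_tensor_mem _ _ _ _ (hR.kerPartA_self_mem v)
    (hR.kerPartA_const_mem_two_zero b) rfl rfl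
  rw [append_const_two_eq_snoc_snoc, Fin.append_elim0] at hv
  have hc := hR.cond_comp_mem hw hv (compatible_kerPartA _ _ _)
  rwa [compPart_kerPartA fun s y hsy => ⟨y.castSucc.castSucc, by simpa using hsy.symm⟩] at hc

lemma kerPartA_snoc_append_mem (hR : IsSkewCategory R) {k : ℕ} {i : Fin k → ℕ}
    (hi : kerPartA i (Fin.elim0 : Fin 0 → ℕ) ∈ R k 0) (b : ℕ) :
    kerPartA (Fin.snoc (Fin.append (fun _ : Fin 1 => b) i) b) (Fin.elim0 : Fin 0 → ℕ)
      ∈ R (1 + k + 1) 0 := by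
  have h := hR.conn_tensor_mem _ _ _ _ (hR.kerPartA_const_mem_one_one b) hi rfl rfl
  have hb : Fin.append (fun _ : Fin 1 => b) (Fin.elim0 : Fin 0 → ℕ) = Fin.snoc Fin.elim0 b := by
    ext j
    fin_cases j
    rfl
  rw [hb] at h
  exact hR.kerPartA_snoc_mem_of_mem_snoc h

lemma exists_mem_aWord_eq_mul_inv (hR : IsSkewCategory R) {l : ℕ} (v : Fin l → ℕ) :
    ∀ {k : ℕ} (w : Fin k → ℕ), kerPartA w v ∈ R k l →
      ∃ (K : ℕ) (W : Fin K → ℕ),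
        kerPartA W (Fin.elim0 : Fin 0 → ℕ) ∈ R K 0 ∧ aWord W = aWord w * (aWord v)⁻¹ := by
  induction l with
  | zero =>
      intro k w h
      rw [Subsingleton.elim v Fin.elim0] at h ⊢
      exact ⟨k, w, h, by rw [aWord_elim0, inv_one, mul_one]⟩
  | succ l ih =>
      intro k w h
      have hv := aWord_snoc (Fin.init v) (v (Fin.last l))
      rw [Fin.snoc_init_self] at hv
      rw [← Fin.snoc_init_self v] at h
      obtain ⟨K, W, hW, hWw⟩ := ih (Fin.init v) _ (hR.kerPartA_snoc_mem_of_mem_snoc h)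
      refine ⟨K, W, hW, ?_⟩
      rw [hWw, aWord_snoc, hv, mul_inv_rev, gen_inv, mul_assoc]

end IsSkewCategory

section Finfty

variable {R : ∀ k l : ℕ, Set (Part k l)}

lemma one_mem_Finfty (hR : IsSkewCategory R) : 1 ∈ Finfty R :=
  ⟨0, Fin.elim0, hR.kerPartA_elim0_mem, aWord_elim0.symm⟩

lemma mul_mem_Finfty (hR : IsSkewCategory R) {a b : FreeZ2} :
    a ∈ Finfty R → b ∈ Finfty R → a * b ∈ Finfty R := by
  rintro ⟨k, i, hi, rfl⟩ ⟨k', f, hf, rfl⟩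
  have h := hR.conn_tensor_mem _ _ _ _ hi hf rfl rfl
  have h0 : (Fin.append (Fin.elim0 : Fin 0 → ℕ) Fin.elim0 : Fin 0 → ℕ) = Fin.elim0 :=
    funext fun x => x.elim0
  rw [h0] at h
  exact ⟨k + k', Fin.append i f, h, (aWord_append i f).symm⟩

lemma inv_mem_Finfty (hR : IsSkewCategory R) {a : FreeZ2} : a ∈ Finfty R → a⁻¹ ∈ Finfty R := by
  rintro ⟨k, i, hi, rfl⟩
  have h := hR.invol_mem hi
  rw [kerPart0, invol_kerPartA] at h
  obtain ⟨K, W, hW, hWi⟩ := hR.exists_mem_aWord_eq_mul_inv i Fin.elim0 h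
  exact ⟨K, W, hW, by rw [hWi, aWord_elim0, one_mul]⟩

lemma gen_mul_mul_gen_mem_Finfty (hR : IsSkewCategory R) (b : ℕ) {a : FreeZ2} :
    a ∈ Finfty R → gen b * a * gen b ∈ Finfty R := by
  rintro ⟨k, i, hi, rfl⟩
  refine ⟨_, _, hR.kerPartA_snoc_append_mem hi b, ?_⟩
  rw [aWord_snoc, aWord_append, aWord_const_one]

lemma conj_mem_Finfty (hR : IsSkewCategory R) (g : FreeZ2) {a : FreeZ2} :
    a ∈ Finfty R → g * a * g⁻¹ ∈ Finfty R := by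
  induction g using Monoid.CoprodI.induction_on generalizing a with
  | one => simp
  | of b m =>
      obtain rfl | rfl : m = 1 ∨ m = Multiplicative.ofAdd 1 := by revert m; decide
      · simp
      · rw [← gen, gen_inv]
        exact gen_mul_mul_gen_mem_Finfty hR b
  | mul x y hx hy =>
      intro ha
      simpa only [mul_inv_rev, mul_assoc] using hx (hy ha)

lemma permEndo_image_Finfty (σ : Equiv.Perm ℕ) : permEndo σ '' Finfty R = Finfty R := by
  refine subset_antisymm ?_ ?_
  · rintro _ ⟨_, ⟨k, i, hi, rfl⟩, rfl⟩
    exact ⟨k, σ ∘ i, by rwa [kerPart0_comp_of_injective σ.injective], permEndo_aWord σ i⟩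
  · rintro _ ⟨k, i, hi, rfl⟩
    refine ⟨aWord (σ.symm ∘ i), ⟨k, σ.symm ∘ i, ?_, rfl⟩, ?_⟩
    · rwa [kerPart0_comp_of_injective σ.symm.injective]
    · rw [permEndo_aWord, ← Function.comp_assoc, Equiv.self_comp_symm, Function.id_comp]

def finftySubgroup (hR : IsSkewCategory R) : Subgroup FreeZ2 where
  carrier := Finfty R
  one_mem' := one_mem_Finfty hR
  mul_mem' := mul_mem_Finfty hR
  inv_mem' := inv_mem_Finfty hR

lemma finftySubgroup_normal (hR : IsSkewCategory R) : (finftySubgroup hR).Normal :=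
  ⟨fun _ ha g => conj_mem_Finfty hR g ha⟩

end Finfty

/-- For a skew category of partitions `R`, the set
`F_∞(R)` is an `S_∞`-invariant normal subgroup of `ℤ₂^{*∞}`. -/
theorem Finfty_isNormalSubgroup (R : ∀ k l : ℕ, Set (Part k l))
    (hR : IsSkewCategory R) :
    ∃ N : Subgroup FreeZ2, (N : Set FreeZ2) = Finfty R ∧ N.Normal ∧
      ∀ σ : Equiv.Perm ℕ, FinitelySupported ⇑σ →
        permEndo ⇑σ '' (N : Set FreeZ2) = (N : Set FreeZ2) :=
  ⟨finftySubgroup hR, rfl, finftySubgroup_normal hR, fun σ _ => permEndo_image_Finfty σ⟩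

end GTQG
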